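/- For 0 ≤ a < Q, the weight w_a(x) = d(0,x)^{-a} belongs to the Muckenhoupt class A₁ on the homogeneous space (ℝ^{n₁+n₂}, d, Lebesgue): there is a constant C such that for every d-ball B, (1/|B|) ∫_B d(0,x)^{-a} dx ≤ C · ess inf_{x ∈ B} d(0,x)^{-a}. -/

import Mathlib

open MeasureTheory Filter Topology
open scoped ENNReal NNReal

/-- The Grushin product space `ℝ^{n₁} × ℝ^{n₂}` with Euclidean norms on the factors. -/
abbrev GS (n₁ n₂ : ℕ) := EuclideanSpace ℝ (Fin n₁) × EuclideanSpace ℝ (Fin n₂)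

/-- The Grushin quasi-metric
`d(x,y) = |x'-y'| + |x''-y''|/(|x'|+|y'|)^κ` when `|x''-y''|^{1/(1+κ)} ≤ |x'|+|y'|`,
and `d(x,y) = |x'-y'| + |x''-y''|^{1/(1+κ)}` otherwise (this piecewise form implements the
convention that the first term of the min is `+∞` when `|x'|+|y'| = 0`). -/
noncomputable def gd (n₁ n₂ κ : ℕ) (x y : GS n₁ n₂) : ℝ :=
  ‖x.1 - y.1‖ +
    if ‖x.2 - y.2‖ ^ ((1 : ℝ) / (1 + (κ : ℝ))) ≤ ‖x.1‖ + ‖y.1‖ then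
      ‖x.2 - y.2‖ / (‖x.1‖ + ‖y.1‖) ^ κ
    else ‖x.2 - y.2‖ ^ ((1 : ℝ) / (1 + (κ : ℝ)))


/-- The ball of the Grushin quasi-metric. -/
def gball (n₁ n₂ κ : ℕ) (x : GS n₁ n₂) (r : ℝ) : Set (GS n₁ n₂) :=
  {y | gd n₁ n₂ κ x y < r}

noncomputable def gρ (κ : ℕ) (s u : ℝ) : ℝ :=
  if u ^ ((1 : ℝ) / (1 + (κ : ℝ))) ≤ s then u / s ^ κ else u ^ ((1 : ℝ) / (1 + (κ : ℝ)))

lemma gd_eq (n₁ n₂ κ : ℕ) (x y : GS n₁ n₂) :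
    gd n₁ n₂ κ x y = ‖x.1 - y.1‖ + gρ κ (‖x.1‖ + ‖y.1‖) ‖x.2 - y.2‖ := rfl

lemma texp_pos (κ : ℕ) : 0 < (1 : ℝ) / (1 + (κ : ℝ)) := by positivity

lemma texp_le_one (κ : ℕ) : (1 : ℝ) / (1 + (κ : ℝ)) ≤ 1 := by
  rw [div_le_one (by positivity)]
  simp

lemma cast_succ (κ : ℕ) : ((1 + κ : ℕ) : ℝ) = 1 + (κ : ℝ) := by push_cast; ring

lemma t_pow (κ : ℕ) {u : ℝ} (hu : 0 ≤ u) :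
    (u ^ ((1 : ℝ) / (1 + (κ : ℝ)))) ^ (1 + κ) = u := by
  rw [← Real.rpow_natCast (u ^ ((1 : ℝ) / (1 + (κ : ℝ)))) (1 + κ), ← Real.rpow_mul hu,
    cast_succ, one_div, inv_mul_cancel₀ (by positivity), Real.rpow_one]

lemma pow_texp (κ : ℕ) {c : ℝ} (hc : 0 ≤ c) :
    (c ^ (1 + κ)) ^ ((1 : ℝ) / (1 + (κ : ℝ))) = c := by
  rw [← Real.rpow_natCast c (1 + κ), ← Real.rpow_mul hc, cast_succ,
    mul_one_div, div_self (by positivity), Real.rpow_one]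

lemma gρ_nonneg (κ : ℕ) {s u : ℝ} (hs : 0 ≤ s) (hu : 0 ≤ u) : 0 ≤ gρ κ s u := by
  unfold gρ
  split
  · positivity
  · positivity

lemma gρ_le_t (κ : ℕ) {s u : ℝ} (hu : 0 ≤ u) :
    gρ κ s u ≤ u ^ ((1 : ℝ) / (1 + (κ : ℝ))) := by
  set t := u ^ ((1 : ℝ) / (1 + (κ : ℝ))) with ht
  have ht0 : 0 ≤ t := Real.rpow_nonneg hu _
  unfold gρ
  rw [← ht]
  split
  · rename_i h
    rcases eq_or_lt_of_le ht0 with h0 | h0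
    · have hu0 : u = 0 := by
        have := t_pow κ hu
        rw [← ht, ← h0] at this
        simpa using this.symm
      simp [hu0, ht0]
    · have hs0 : 0 < s := lt_of_lt_of_le h0 h
      rw [div_le_iff₀ (by positivity)]
      calc u = t ^ (1 + κ) := (t_pow κ hu).symm
        _ = t * t ^ κ := by ring
        _ ≤ t * s ^ κ := by
            exact mul_le_mul_of_nonneg_left (pow_le_pow_left₀ ht0 h κ) ht0
  · exact le_refl _

lemma t_le_gρ_add_s (κ : ℕ) {s u : ℝ} (hs : 0 ≤ s) (hu : 0 ≤ u) :
    u ^ ((1 : ℝ) / (1 + (κ : ℝ))) ≤ gρ κ s u + s := by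
  unfold gρ
  split
  · rename_i h
    have : 0 ≤ u / s ^ κ := by positivity
    linarith
  · linarith

lemma rpow_add_le (u v p : ℝ) (hu : 0 ≤ u) (hv : 0 ≤ v) (h0 : 0 ≤ p) (h1 : p ≤ 1) :
    (u + v) ^ p ≤ u ^ p + v ^ p := by
  have h := NNReal.rpow_add_le_add_rpow (u.toNNReal) (v.toNNReal) h0 h1
  have h2 := (NNReal.coe_le_coe).2 h
  push_cast [Real.coe_toNNReal u hu, Real.coe_toNNReal v hv] at h2
  exact h2

lemma gd_nonneg (n₁ n₂ κ : ℕ) (x y : GS n₁ n₂) : 0 ≤ gd n₁ n₂ κ x y := by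
  rw [gd_eq]
  have := gρ_nonneg κ (by positivity : (0:ℝ) ≤ ‖x.1‖ + ‖y.1‖) (norm_nonneg (x.2 - y.2))
  have := norm_nonneg (x.1 - y.1)
  linarith

lemma gd_symm (n₁ n₂ κ : ℕ) (x y : GS n₁ n₂) : gd n₁ n₂ κ x y = gd n₁ n₂ κ y x := by
  rw [gd_eq, gd_eq, norm_sub_rev, norm_sub_rev x.2, add_comm ‖y.1‖]

lemma gρ_of_le (κ : ℕ) {s u : ℝ} (h : u ^ ((1 : ℝ) / (1 + (κ : ℝ))) ≤ s) :
    gρ κ s u = u / s ^ κ := by unfold gρ; exact if_pos h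

lemma gρ_of_not (κ : ℕ) {s u : ℝ} (h : ¬ u ^ ((1 : ℝ) / (1 + (κ : ℝ))) ≤ s) :
    gρ κ s u = u ^ ((1 : ℝ) / (1 + (κ : ℝ))) := by unfold gρ; exact if_neg h

lemma gρ_lower (κ : ℕ) {si ui t : ℝ} (ht : 0 < t) (hsi : 0 ≤ si) (hui : 0 ≤ ui)
    (hti : t / 2 ≤ ui ^ ((1 : ℝ) / (1 + (κ : ℝ)))) (hsi3t : si ≤ 3 * t) :
    t ≤ 2 * 6 ^ κ * gρ κ si ui := by
  have hti0 : (0 : ℝ) ≤ ui ^ ((1 : ℝ) / (1 + (κ : ℝ))) := Real.rpow_nonneg hui _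
  have h6 : (1 : ℝ) ≤ 6 ^ κ := one_le_pow₀ (by norm_num)
  have h6' : (6 : ℝ) ^ κ = 2 ^ κ * 3 ^ κ := by rw [← mul_pow]; norm_num
  by_cases hb : ui ^ ((1 : ℝ) / (1 + (κ : ℝ))) ≤ si
  · rw [gρ_of_le κ hb]
    have hsipos : 0 < si := lt_of_lt_of_le (by linarith) hb
    have hupow : ui = (ui ^ ((1 : ℝ) / (1 + (κ : ℝ)))) ^ (1 + κ) := (t_pow κ hui).symm
    have h1 : (t / 2) ^ (1 + κ) ≤ ui := by
      rw [hupow]; exact pow_le_pow_left₀ (by positivity) hti _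
    have h2 : si ^ κ ≤ (3 * t) ^ κ := pow_le_pow_left₀ hsi hsi3t κ
    have h3 : (t / 2) ^ (1 + κ) / (3 * t) ^ κ ≤ ui / si ^ κ :=
      div_le_div₀ hui h1 (by positivity) h2
    have h4 : (t / 2) ^ (1 + κ) / (3 * t) ^ κ = t / (2 * 6 ^ κ) := by
      rw [h6', div_pow, mul_pow]
      have htκ : (0:ℝ) < t ^ κ := pow_pos ht κ
      field_simp
      ring
    rw [h4, div_le_iff₀ (by positivity)] at h3
    calc t ≤ ui / si ^ κ * (2 * 6 ^ κ) := h3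
      _ = 2 * 6 ^ κ * (ui / si ^ κ) := by ring
  · rw [gρ_of_not κ hb]
    nlinarith [mul_nonneg (sub_nonneg.2 h6) hti0]

lemma gρ_term (κ : ℕ) {s si ui : ℝ} (hs : 0 < s) (hsi : 0 ≤ si) (hui : 0 ≤ ui)
    (hsi3 : si ≤ 3 * s) (hρs : gρ κ si ui ≤ s) :
    ui / s ^ κ ≤ 3 ^ κ * gρ κ si ui := by
  have h3 : (1 : ℝ) ≤ 3 ^ κ := one_le_pow₀ (by norm_num)
  have hti0 : (0 : ℝ) ≤ ui ^ ((1 : ℝ) / (1 + (κ : ℝ))) := Real.rpow_nonneg hui _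
  have hupow : ui = (ui ^ ((1 : ℝ) / (1 + (κ : ℝ)))) ^ (1 + κ) := (t_pow κ hui).symm
  by_cases hb : ui ^ ((1 : ℝ) / (1 + (κ : ℝ))) ≤ si
  · rw [gρ_of_le κ hb]
    by_cases hsi0 : si = 0
    · have hti00 : ui ^ ((1 : ℝ) / (1 + (κ : ℝ))) = 0 := by
        apply le_antisymm _ hti0; rw [← hsi0]; exact hb
      have hui0 : ui = 0 := by
        rw [hupow, hti00]; exact zero_pow (by omega)
      simp [hui0]
    · have hsip : 0 < si := lt_of_le_of_ne hsi (Ne.symm hsi0)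
      rw [div_le_iff₀ (pow_pos hs κ)]
      calc ui = ui / si ^ κ * si ^ κ := (div_mul_cancel₀ ui (by positivity)).symm
        _ ≤ ui / si ^ κ * (3 ^ κ * s ^ κ) := by
            apply mul_le_mul_of_nonneg_left _ (by positivity)
            rw [← mul_pow]; exact pow_le_pow_left₀ hsi hsi3 κ
        _ = 3 ^ κ * (ui / si ^ κ) * s ^ κ := by ring
  · rw [gρ_of_not κ hb]
    rw [gρ_of_not κ hb] at hρs
    rw [div_le_iff₀ (pow_pos hs κ)]
    calc ui = (ui ^ ((1 : ℝ) / (1 + (κ : ℝ)))) ^ (1 + κ) := hupow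
      _ = ui ^ ((1 : ℝ) / (1 + (κ : ℝ))) * (ui ^ ((1 : ℝ) / (1 + (κ : ℝ)))) ^ κ := by ring
      _ ≤ ui ^ ((1 : ℝ) / (1 + (κ : ℝ))) * s ^ κ :=
          mul_le_mul_of_nonneg_left (pow_le_pow_left₀ hti0 hρs κ) hti0
      _ ≤ 3 ^ κ * ui ^ ((1 : ℝ) / (1 + (κ : ℝ))) * s ^ κ :=
          mul_le_mul_of_nonneg_right (le_mul_of_one_le_left hti0 h3) (by positivity)

set_option maxHeartbeats 1000000 in
lemma gd_quasi (n₁ n₂ κ : ℕ) (hκ : 1 ≤ κ) (x y z : GS n₁ n₂) :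
    gd n₁ n₂ κ x z ≤ (3 * 6 ^ κ) * (gd n₁ n₂ κ x y + gd n₁ n₂ κ y z) := by
  have hθ0 := texp_pos κ
  have hθ1 := texp_le_one κ
  have h6 : (6 : ℝ) ≤ 6 ^ κ := by
    calc (6 : ℝ) = 6 ^ 1 := (pow_one 6).symm
      _ ≤ 6 ^ κ := pow_le_pow_right₀ (by norm_num) hκ
  have h61 : (1 : ℝ) ≤ 6 ^ κ := by linarith
  have h6nn : (0 : ℝ) ≤ 6 ^ κ := by linarith
  have h36 : (3 : ℝ) ^ κ ≤ 6 ^ κ := pow_le_pow_left₀ (by norm_num) (by norm_num) κ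
  have h3nn : (0 : ℝ) ≤ 3 ^ κ := pow_nonneg (by norm_num) κ
  rw [gd_eq, gd_eq, gd_eq]
  set A := ‖x.1 - z.1‖ with hA_def
  set A1 := ‖x.1 - y.1‖ with hA1_def
  set A2 := ‖y.1 - z.1‖ with hA2_def
  set u := ‖x.2 - z.2‖ with hu_def
  set u1 := ‖x.2 - y.2‖ with hu1_def
  set u2 := ‖y.2 - z.2‖ with hu2_def
  set s := ‖x.1‖ + ‖z.1‖ with hs_def
  set s1 := ‖x.1‖ + ‖y.1‖ with hs1_def
  set s2 := ‖y.1‖ + ‖z.1‖ with hs2_def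
  have hA0 : 0 ≤ A := norm_nonneg _
  have hA10 : 0 ≤ A1 := norm_nonneg _
  have hA20 : 0 ≤ A2 := norm_nonneg _
  have hu0 : 0 ≤ u := norm_nonneg _
  have hu10 : 0 ≤ u1 := norm_nonneg _
  have hu20 : 0 ≤ u2 := norm_nonneg _
  have hs0 : 0 ≤ s := add_nonneg (norm_nonneg _) (norm_nonneg _)
  have hs10 : 0 ≤ s1 := add_nonneg (norm_nonneg _) (norm_nonneg _)
  have hs20 : 0 ≤ s2 := add_nonneg (norm_nonneg _) (norm_nonneg _)
  have hρ10 : 0 ≤ gρ κ s1 u1 := gρ_nonneg κ hs10 hu10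
  have hρ20 : 0 ≤ gρ κ s2 u2 := gρ_nonneg κ hs20 hu20
  have hAtri : A ≤ A1 + A2 := by
    rw [hA_def, hA1_def, hA2_def]
    simpa [dist_eq_norm] using dist_triangle x.1 y.1 z.1
  have hutri : u ≤ u1 + u2 := by
    rw [hu_def, hu1_def, hu2_def]
    simpa [dist_eq_norm] using dist_triangle x.2 y.2 z.2
  have hyx : ‖y.1‖ ≤ ‖x.1‖ + A1 := by
    have h := norm_sub_norm_le y.1 x.1
    rw [norm_sub_rev] at h
    rw [hA1_def]
    linarith
  have hyz : ‖y.1‖ ≤ ‖z.1‖ + A2 := by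
    have h := norm_sub_norm_le y.1 z.1
    rw [hA2_def]
    linarith
  have hxls : ‖x.1‖ ≤ s := by rw [hs_def]; have := norm_nonneg z.1; linarith
  have hzls : ‖z.1‖ ≤ s := by rw [hs_def]; have := norm_nonneg x.1; linarith
  have hs1b : s1 ≤ 2 * s + A1 := by rw [hs1_def]; linarith
  have hs2b : s2 ≤ 2 * s + A2 := by rw [hs2_def]; linarith
  set D := A1 + gρ κ s1 u1 + A2 + gρ κ s2 u2 with hD_def
  have hD0 : 0 ≤ D := by rw [hD_def]; linarith
  have hA1D : A1 ≤ D := by rw [hD_def]; linarith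
  have hA2D : A2 ≤ D := by rw [hD_def]; linarith
  have hρ1D : gρ κ s1 u1 ≤ D := by rw [hD_def]; linarith
  have hρ2D : gρ κ s2 u2 ≤ D := by rw [hD_def]; linarith
  have ht12 : u ^ ((1:ℝ)/(1+(κ:ℝ))) ≤ u1 ^ ((1:ℝ)/(1+(κ:ℝ))) + u2 ^ ((1:ℝ)/(1+(κ:ℝ))) := by
    calc u ^ ((1:ℝ)/(1+(κ:ℝ))) ≤ (u1 + u2) ^ ((1:ℝ)/(1+(κ:ℝ))) :=
          Real.rpow_le_rpow hu0 hutri (le_of_lt hθ0)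
      _ ≤ _ := rpow_add_le u1 u2 _ hu10 hu20 (le_of_lt hθ0) hθ1
  have ht1 : u1 ^ ((1:ℝ)/(1+(κ:ℝ))) ≤ gρ κ s1 u1 + s1 := t_le_gρ_add_s κ hs10 hu10
  have ht2 : u2 ^ ((1:ℝ)/(1+(κ:ℝ))) ≤ gρ κ s2 u2 + s2 := t_le_gρ_add_s κ hs20 hu20
  have ht0 : 0 ≤ u ^ ((1:ℝ)/(1+(κ:ℝ))) := Real.rpow_nonneg hu0 _
  have hρt : gρ κ s u ≤ u ^ ((1:ℝ)/(1+(κ:ℝ))) := gρ_le_t κ hu0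
  have hmain : gρ κ s u ≤ 2 * 6 ^ κ * D := by
    by_cases hsD : s ≤ D
    · have h5 : gρ κ s u ≤ 5 * D := by rw [hD_def]; rw [hD_def] at hsD; linarith
      nlinarith [mul_nonneg (by linarith : (0:ℝ) ≤ 2 * 6 ^ κ - 5) hD0]
    · push_neg at hsD
      have hspos : 0 < s := lt_of_le_of_lt hD0 hsD
      by_cases hb : u ^ ((1:ℝ)/(1+(κ:ℝ))) ≤ s
      · rw [gρ_of_le κ hb]
        have e1 : u1 / s ^ κ ≤ 3 ^ κ * gρ κ s1 u1 :=
          gρ_term κ hspos hs10 hu10 (by linarith) (by linarith)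
        have e2 : u2 / s ^ κ ≤ 3 ^ κ * gρ κ s2 u2 :=
          gρ_term κ hspos hs20 hu20 (by linarith) (by linarith)
        have hdiv : u / s ^ κ ≤ u1 / s ^ κ + u2 / s ^ κ := by
          rw [← add_div]
          exact (div_le_div_iff_of_pos_right (pow_pos hspos κ)).2 hutri
        calc u / s ^ κ ≤ u1 / s ^ κ + u2 / s ^ κ := hdiv
          _ ≤ 3 ^ κ * gρ κ s1 u1 + 3 ^ κ * gρ κ s2 u2 := add_le_add e1 e2
          _ = 3 ^ κ * (gρ κ s1 u1 + gρ κ s2 u2) := by ring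
          _ ≤ 3 ^ κ * D := mul_le_mul_of_nonneg_left (by rw [hD_def]; linarith) h3nn
          _ ≤ 2 * 6 ^ κ * D := mul_le_mul_of_nonneg_right (by linarith) hD0
      · rw [gρ_of_not κ hb]
        push_neg at hb
        have htpos : 0 < u ^ ((1:ℝ)/(1+(κ:ℝ))) := lt_of_le_of_lt hs0 hb
        rcases le_total (u1 ^ ((1:ℝ)/(1+(κ:ℝ)))) (u2 ^ ((1:ℝ)/(1+(κ:ℝ)))) with hc | hc
        · have hkey := gρ_lower κ htpos hs20 hu20 (by linarith) (by linarith)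
          calc u ^ ((1:ℝ)/(1+(κ:ℝ))) ≤ 2 * 6 ^ κ * gρ κ s2 u2 := hkey
            _ ≤ 2 * 6 ^ κ * D := mul_le_mul_of_nonneg_left hρ2D (by linarith)
        · have hkey := gρ_lower κ htpos hs10 hu10 (by linarith) (by linarith)
          calc u ^ ((1:ℝ)/(1+(κ:ℝ))) ≤ 2 * 6 ^ κ * gρ κ s1 u1 := hkey
            _ ≤ 2 * 6 ^ κ * D := mul_le_mul_of_nonneg_left hρ1D (by linarith)
  calc A + gρ κ s u ≤ D + 2 * 6 ^ κ * D := by rw [hD_def]; rw [hD_def] at hmain; linarith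
    _ ≤ 3 * 6 ^ κ * D := by nlinarith [mul_nonneg (sub_nonneg.2 h61) hD0]
    _ = 3 * 6 ^ κ * (A1 + gρ κ s1 u1 + (A2 + gρ κ s2 u2)) := by rw [hD_def]; ring

lemma gd_zero (n₁ n₂ κ : ℕ) (x : GS n₁ n₂) :
    gd n₁ n₂ κ 0 x = ‖x.1‖ + gρ κ ‖x.1‖ ‖x.2‖ := by
  rw [gd_eq]
  norm_num

lemma gd_zero_pos (n₁ n₂ κ : ℕ) {x : GS n₁ n₂} (hx : x ≠ 0) : 0 < gd n₁ n₂ κ 0 x := by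
  rw [gd_zero]
  by_cases h1 : x.1 = 0
  · have h2 : x.2 ≠ 0 := by
      intro h2
      exact hx (Prod.ext h1 h2)
    have hu : 0 < ‖x.2‖ := norm_pos_iff.2 h2
    have hρ : 0 < gρ κ ‖x.1‖ ‖x.2‖ := by
      have hcond : ¬ ‖x.2‖ ^ ((1 : ℝ) / (1 + (κ : ℝ))) ≤ ‖x.1‖ := by
        rw [h1]
        push_neg
        simpa using Real.rpow_pos_of_pos hu _
      rw [gρ_of_not κ hcond]
      exact Real.rpow_pos_of_pos hu _
    have := norm_nonneg x.1
    linarith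
  · have h1' : 0 < ‖x.1‖ := norm_pos_iff.2 h1
    have := gρ_nonneg κ (norm_nonneg x.1) (norm_nonneg x.2)
    linarith

lemma measurable_gd (n₁ n₂ κ : ℕ) (x₀ : GS n₁ n₂) :
    Measurable (fun y : GS n₁ n₂ => gd n₁ n₂ κ x₀ y) := by
  simp only [gd_eq]
  have hm1 : Measurable (fun y : GS n₁ n₂ => ‖x₀.1 - y.1‖) :=
    (continuous_const.sub continuous_fst).norm.measurable
  have hmu : Measurable (fun y : GS n₁ n₂ => ‖x₀.2 - y.2‖) :=
    (continuous_const.sub continuous_snd).norm.measurable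
  have hms : Measurable (fun y : GS n₁ n₂ => ‖x₀.1‖ + ‖y.1‖) :=
    (continuous_const.add continuous_fst.norm).measurable
  apply hm1.add
  unfold gρ
  have hmt : Measurable (fun y : GS n₁ n₂ => ‖x₀.2 - y.2‖ ^ ((1 : ℝ) / (1 + (κ : ℝ)))) :=
    (Real.continuous_rpow_const (le_of_lt (texp_pos κ))).measurable.comp hmu
  exact Measurable.ite (measurableSet_le hmt hms) (hmu.div (hms.pow measurable_const))
    hmt

lemma measurableSet_gball (n₁ n₂ κ : ℕ) (x₀ : GS n₁ n₂) (r : ℝ) :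
    MeasurableSet (gball n₁ n₂ κ x₀ r) :=
  measurableSet_lt (measurable_gd n₁ n₂ κ x₀) measurable_const

lemma measurable_weight (n₁ n₂ κ : ℕ) (a : ℝ) :
    Measurable (fun x : GS n₁ n₂ => gd n₁ n₂ κ 0 x ^ (-a)) :=
  (measurable_gd n₁ n₂ κ 0).pow measurable_const

lemma u_lt_of_gρ_lt (κ : ℕ) {s u r S : ℝ} (hu : 0 ≤ u) (hr : 0 < r)
    (h : gρ κ s u < r) (hsS : s ≤ S) (hS : 0 ≤ S) :
    u < max (r * S ^ κ) (r ^ (1 + κ)) := by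
  by_cases hb : u ^ ((1 : ℝ) / (1 + (κ : ℝ))) ≤ s
  · rw [gρ_of_le κ hb] at h
    rcases eq_or_lt_of_le hu with h0 | h0
    · rw [← h0]
      exact lt_max_of_lt_right (pow_pos hr _)
    · have ht : 0 < u ^ ((1 : ℝ) / (1 + (κ : ℝ))) := Real.rpow_pos_of_pos h0 _
      have hs : 0 < s := lt_of_lt_of_le ht hb
      rw [div_lt_iff₀ (pow_pos hs κ)] at h
      apply lt_max_of_lt_left
      calc u < r * s ^ κ := h
        _ ≤ r * S ^ κ := by
            apply mul_le_mul_of_nonneg_left _ (le_of_lt hr)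
            exact pow_le_pow_left₀ (le_of_lt hs) hsS κ
  · rw [gρ_of_not κ hb] at h
    apply lt_max_of_lt_right
    calc u = (u ^ ((1 : ℝ) / (1 + (κ : ℝ)))) ^ (1 + κ) := (t_pow κ hu).symm
      _ < r ^ (1 + κ) := by
          apply pow_lt_pow_left₀ h (Real.rpow_nonneg hu _)
          omega

lemma gball_subset_prod (n₁ n₂ κ : ℕ) (x₀ : GS n₁ n₂) (r : ℝ) (hr : 0 < r) :
    gball n₁ n₂ κ x₀ r ⊆
      (Metric.ball x₀.1 r) ×ˢ
        (Metric.ball x₀.2 (max (r * (2 * ‖x₀.1‖ + r) ^ κ) (r ^ (1 + κ)))) := by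
  intro y hy
  rw [gball, Set.mem_setOf_eq, gd_eq] at hy
  have hρ0 : 0 ≤ gρ κ (‖x₀.1‖ + ‖y.1‖) ‖x₀.2 - y.2‖ :=
    gρ_nonneg κ (by positivity) (norm_nonneg _)
  have hA0 : 0 ≤ ‖x₀.1 - y.1‖ := norm_nonneg _
  have h1 : ‖x₀.1 - y.1‖ < r := by linarith
  have hρ : gρ κ (‖x₀.1‖ + ‖y.1‖) ‖x₀.2 - y.2‖ < r := by linarith
  have hy1 : ‖y.1‖ ≤ 2 * ‖x₀.1‖ + r - ‖x₀.1‖ := by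
    have h := norm_sub_norm_le y.1 x₀.1
    rw [norm_sub_rev] at h
    linarith
  constructor
  · rw [Metric.mem_ball, dist_comm, dist_eq_norm]
    exact h1
  · rw [Metric.mem_ball, dist_comm, dist_eq_norm]
    exact u_lt_of_gρ_lt κ (norm_nonneg _) hr hρ (by linarith) (by positivity)

lemma prod_subset_gball (n₁ n₂ κ : ℕ) (x₀ : GS n₁ n₂) (r : ℝ) (hr : 0 < r) :
    (Metric.ball x₀.1 (r / 2)) ×ˢ (Metric.ball x₀.2 ((r / 2) ^ (1 + κ))) ⊆
      gball n₁ n₂ κ x₀ r := by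
  rintro y ⟨hy1, hy2⟩
  rw [Metric.mem_ball, dist_comm, dist_eq_norm] at hy1 hy2
  rw [gball, Set.mem_setOf_eq, gd_eq]
  have ht : ‖x₀.2 - y.2‖ ^ ((1 : ℝ) / (1 + (κ : ℝ))) < r / 2 := by
    calc ‖x₀.2 - y.2‖ ^ ((1 : ℝ) / (1 + (κ : ℝ)))
        < ((r / 2) ^ (1 + κ)) ^ ((1 : ℝ) / (1 + (κ : ℝ))) :=
          Real.rpow_lt_rpow (norm_nonneg _) hy2 (texp_pos κ)
      _ = r / 2 := pow_texp κ (by positivity)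
  have := gρ_le_t (s := ‖x₀.1‖ + ‖y.1‖) κ (norm_nonneg (x₀.2 - y.2))
  linarith

noncomputable def ballVol (n : ℕ) : ℝ≥0∞ :=
  volume (Metric.ball (0 : EuclideanSpace ℝ (Fin n)) 1)

lemma ballVol_pos (n : ℕ) : 0 < ballVol n := Metric.measure_ball_pos _ _ one_pos

lemma ballVol_lt_top (n : ℕ) : ballVol n < ⊤ := measure_ball_lt_top

lemma vol_prod_balls (n₁ n₂ : ℕ) [NeZero n₁] [NeZero n₂] (x : GS n₁ n₂) (r₁ r₂ : ℝ)
    (h₁ : 0 ≤ r₁) (h₂ : 0 ≤ r₂) :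
    volume ((Metric.ball x.1 r₁) ×ˢ (Metric.ball x.2 r₂)) =
      ENNReal.ofReal (r₁ ^ n₁ * r₂ ^ n₂) * (ballVol n₁ * ballVol n₂) := by
  rw [show (volume : Measure (GS n₁ n₂)) = (volume : Measure (EuclideanSpace ℝ (Fin n₁))).prod
      (volume : Measure (EuclideanSpace ℝ (Fin n₂))) from rfl]
  rw [Measure.prod_prod, Measure.addHaar_ball volume x.1 h₁, Measure.addHaar_ball volume x.2 h₂,
    finrank_euclideanSpace_fin, finrank_euclideanSpace_fin,
    ENNReal.ofReal_mul (by positivity), ballVol, ballVol]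
  ring

lemma gball_vol_le (n₁ n₂ κ : ℕ) (hn₁ : 1 ≤ n₁) (hn₂ : 1 ≤ n₂) (s : ℝ) (hs : 0 < s) :
    volume (gball n₁ n₂ κ 0 s) ≤
      ENNReal.ofReal (s ^ (n₁ + (1 + κ) * n₂)) * (ballVol n₁ * ballVol n₂) := by
  haveI : NeZero n₁ := ⟨by omega⟩
  haveI : NeZero n₂ := ⟨by omega⟩
  have hmax : max (s * (2 * ‖(0 : GS n₁ n₂).1‖ + s) ^ κ) (s ^ (1 + κ)) = s ^ (1 + κ) := by
    have : ‖(0 : GS n₁ n₂).1‖ = 0 := norm_zero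
    rw [this]
    rw [show (2:ℝ) * 0 + s = s by ring, show s * s ^ κ = s ^ (1 + κ) by rw [pow_add]; ring,
      max_self]
  have hsub := gball_subset_prod n₁ n₂ κ 0 s hs
  rw [hmax] at hsub
  calc volume (gball n₁ n₂ κ 0 s)
      ≤ volume ((Metric.ball (0 : GS n₁ n₂).1 s) ×ˢ (Metric.ball (0 : GS n₁ n₂).2 (s ^ (1 + κ)))) :=
        measure_mono hsub
    _ = ENNReal.ofReal (s ^ n₁ * (s ^ (1 + κ)) ^ n₂) * (ballVol n₁ * ballVol n₂) :=
        vol_prod_balls n₁ n₂ 0 s (s ^ (1 + κ)) (le_of_lt hs) (by positivity)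
    _ = ENNReal.ofReal (s ^ (n₁ + (1 + κ) * n₂)) * (ballVol n₁ * ballVol n₂) := by
        rw [← pow_mul, ← pow_add]

lemma gball_vol_ge (n₁ n₂ κ : ℕ) (hn₁ : 1 ≤ n₁) (hn₂ : 1 ≤ n₂) (x₀ : GS n₁ n₂) (r : ℝ)
    (hr : 0 < r) :
    ENNReal.ofReal ((r / 2) ^ (n₁ + (1 + κ) * n₂)) * (ballVol n₁ * ballVol n₂) ≤
      volume (gball n₁ n₂ κ x₀ r) := by
  haveI : NeZero n₁ := ⟨by omega⟩
  haveI : NeZero n₂ := ⟨by omega⟩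
  calc ENNReal.ofReal ((r / 2) ^ (n₁ + (1 + κ) * n₂)) * (ballVol n₁ * ballVol n₂)
      = ENNReal.ofReal ((r / 2) ^ n₁ * ((r / 2) ^ (1 + κ)) ^ n₂) * (ballVol n₁ * ballVol n₂) := by
        rw [← pow_mul, ← pow_add]
    _ = volume ((Metric.ball x₀.1 (r / 2)) ×ˢ (Metric.ball x₀.2 ((r / 2) ^ (1 + κ)))) :=
        (vol_prod_balls n₁ n₂ x₀ (r / 2) ((r / 2) ^ (1 + κ)) (by positivity) (by positivity)).symm
    _ ≤ volume (gball n₁ n₂ κ x₀ r) := measure_mono (prod_subset_gball n₁ n₂ κ x₀ r hr)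

lemma gball_vol_lt_top (n₁ n₂ κ : ℕ) (x₀ : GS n₁ n₂) (r : ℝ) (hr : 0 < r) :
    volume (gball n₁ n₂ κ x₀ r) < ⊤ := by
  have hsub := gball_subset_prod n₁ n₂ κ x₀ r hr
  calc volume (gball n₁ n₂ κ x₀ r)
      ≤ volume ((Metric.ball x₀.1 r) ×ˢ
          (Metric.ball x₀.2 (max (r * (2 * ‖x₀.1‖ + r) ^ κ) (r ^ (1 + κ))))) :=
        measure_mono hsub
    _ = volume (Metric.ball x₀.1 r) *
          volume (Metric.ball x₀.2 (max (r * (2 * ‖x₀.1‖ + r) ^ κ) (r ^ (1 + κ)))) := by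
        rw [show (volume : Measure (GS n₁ n₂)) = (volume : Measure (EuclideanSpace ℝ (Fin n₁))).prod
            (volume : Measure (EuclideanSpace ℝ (Fin n₂))) from rfl]
        rw [Measure.prod_prod]
    _ < ⊤ := ENNReal.mul_lt_top measure_ball_lt_top measure_ball_lt_top

lemma rpow_div_pow2 (R : ℝ) (hR : 0 < R) (q : ℝ) (j : ℕ) :
    (R / 2 ^ j) ^ q = R ^ q * ((2:ℝ) ^ (-q)) ^ j := by
  rw [div_eq_mul_inv, ← Real.rpow_natCast (2:ℝ) j, ← Real.rpow_neg (by norm_num),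
    Real.mul_rpow hR.le (Real.rpow_nonneg (by norm_num) _),
    ← Real.rpow_natCast ((2:ℝ) ^ (-q)) j, ← Real.rpow_mul (by norm_num),
    ← Real.rpow_mul (by norm_num)]
  congr 1
  ring

lemma neg_rpow_half (x : ℝ) (hx : 0 < x) (a : ℝ) : (x / 2) ^ (-a) = x ^ (-a) * 2 ^ a := by
  rw [Real.div_rpow hx.le (by norm_num), Real.rpow_neg (by norm_num : (0:ℝ) ≤ 2), div_eq_mul_inv, inv_inv]

lemma vol_zero_singleton (n₁ n₂ : ℕ) (hn₁ : 1 ≤ n₁) :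
    volume ({(0 : GS n₁ n₂)} : Set (GS n₁ n₂)) = 0 := by
  haveI : NeZero n₁ := ⟨by omega⟩
  have h : ({(0 : GS n₁ n₂)} : Set (GS n₁ n₂)) =
      ({0} : Set (EuclideanSpace ℝ (Fin n₁))) ×ˢ ({0} : Set (EuclideanSpace ℝ (Fin n₂))) := by
    rw [Set.singleton_prod_singleton]
    rfl
  rw [h, show (volume : Measure (GS n₁ n₂)) = (volume : Measure (EuclideanSpace ℝ (Fin n₁))).prod
      (volume : Measure (EuclideanSpace ℝ (Fin n₂))) from rfl, Measure.prod_prod,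
    measure_singleton, zero_mul]

set_option maxHeartbeats 1000000 in
lemma weight_lintegral_le (n₁ n₂ κ : ℕ) (hn₁ : 1 ≤ n₁) (hn₂ : 1 ≤ n₂)
    (a : ℝ) (ha0 : 0 ≤ a) (R : ℝ) (hR : 0 < R) :
    ∫⁻ x in gball n₁ n₂ κ 0 R, ENNReal.ofReal (gd n₁ n₂ κ 0 x ^ (-a)) ≤
      ENNReal.ofReal (2 ^ a * R ^ (((n₁ + (1 + κ) * n₂ : ℕ) : ℝ) - a)) *
        (ballVol n₁ * ballVol n₂) *
        (1 - ENNReal.ofReal ((2:ℝ) ^ (a - ((n₁ + (1 + κ) * n₂ : ℕ) : ℝ))))⁻¹ := by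
  classical
  set Q : ℕ := n₁ + (1 + κ) * n₂ with hQ_def
  set V : ℝ≥0∞ := ballVol n₁ * ballVol n₂ with hV_def
  set w : GS n₁ n₂ → ℝ≥0∞ := fun x => ENNReal.ofReal (gd n₁ n₂ κ 0 x ^ (-a)) with hw_def
  set S : ℕ → Set (GS n₁ n₂) := fun j => gball n₁ n₂ κ 0 (R / 2 ^ j) with hS_def
  set A : ℕ → Set (GS n₁ n₂) := fun j => S j \ S (j + 1) with hA_def
  have hcover : gball n₁ n₂ κ 0 R ⊆ {0} ∪ ⋃ j, A j := by
    intro x hx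
    by_cases hx0 : x = 0
    · left; simp [hx0]
    · right
      have hd : 0 < gd n₁ n₂ κ 0 x := gd_zero_pos n₁ n₂ κ hx0
      have hdR : gd n₁ n₂ κ 0 x < R := hx
      obtain ⟨m, hm⟩ := exists_pow_lt_of_lt_one
        (div_pos hd hR) (by norm_num : (1:ℝ)/2 < 1)
      have hm' : ¬ (gd n₁ n₂ κ 0 x < R / 2 ^ m) := by
        push_neg
        have h1 : (1/2:ℝ) ^ m * R < gd n₁ n₂ κ 0 x := (lt_div_iff₀ hR).1 hm
        calc R / 2 ^ m = (1/2:ℝ) ^ m * R := by rw [div_pow, one_pow]; ring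
          _ ≤ gd n₁ n₂ κ 0 x := h1.le
      have hex : ∃ j, ¬ (gd n₁ n₂ κ 0 x < R / 2 ^ j) := ⟨m, hm'⟩
      set k := Nat.find hex with hk_def
      have hkspec := Nat.find_spec hex
      have hk0 : k ≠ 0 := by
        intro h
        rw [← hk_def, h] at hkspec
        simp at hkspec
        linarith
      obtain ⟨j, hj⟩ : ∃ j, k = j + 1 := ⟨k - 1, by omega⟩
      have hPj : gd n₁ n₂ κ 0 x < R / 2 ^ j :=
        not_not.1 (Nat.find_min hex (by omega : j < k))
      apply Set.mem_iUnion.2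
      refine ⟨j, hPj, ?_⟩
      intro hmem
      rw [← hk_def, hj] at hkspec
      exact hkspec hmem
  have hzero : volume ({(0 : GS n₁ n₂)} : Set (GS n₁ n₂)) = 0 := vol_zero_singleton n₁ n₂ hn₁
  have hannulus : ∀ j, ∫⁻ x in A j, w x ≤
      ENNReal.ofReal ((R / 2 ^ (j+1)) ^ (-a)) * volume (S j) := by
    intro j
    calc ∫⁻ x in A j, w x ≤ ∫⁻ _x in A j, ENNReal.ofReal ((R / 2 ^ (j+1)) ^ (-a)) := by
          apply setLIntegral_mono measurable_const
          intro x hx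
          apply ENNReal.ofReal_le_ofReal
          apply Real.rpow_le_rpow_of_nonpos (by positivity) (not_lt.1 hx.2) (by linarith)
      _ = ENNReal.ofReal ((R / 2 ^ (j+1)) ^ (-a)) * volume (A j) := setLIntegral_const _ _
      _ ≤ ENNReal.ofReal ((R / 2 ^ (j+1)) ^ (-a)) * volume (S j) :=
          mul_le_mul_right (measure_mono Set.diff_subset) _
  have hterm : ∀ j, ∫⁻ x in A j, w x ≤
      ENNReal.ofReal ((2 ^ a * R ^ (((Q:ℕ):ℝ) - a)) * ((2:ℝ) ^ (a - ((Q:ℕ):ℝ))) ^ j) * V := by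
    intro j
    refine (hannulus j).trans ?_
    have hρ : (0:ℝ) < R / 2 ^ j := by positivity
    have hreal : (R / 2 ^ (j+1)) ^ (-a) * (R / 2 ^ j) ^ (Q:ℕ) =
        (2 ^ a * R ^ (((Q:ℕ):ℝ) - a)) * ((2:ℝ) ^ (a - ((Q:ℕ):ℝ))) ^ j := by
      have h2 : R / 2 ^ (j+1) = (R / 2 ^ j) / 2 := by rw [pow_succ]; ring
      rw [h2, neg_rpow_half _ hρ a, ← Real.rpow_natCast (R / 2 ^ j) Q]
      rw [show (R / 2 ^ j) ^ (-a) * 2 ^ a * (R / 2 ^ j) ^ ((Q:ℕ):ℝ) =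
          (R / 2 ^ j) ^ (-a) * (R / 2 ^ j) ^ ((Q:ℕ):ℝ) * 2 ^ a by ring]
      rw [← Real.rpow_add hρ, show -a + ((Q:ℕ):ℝ) = ((Q:ℕ):ℝ) - a by ring]
      rw [rpow_div_pow2 R hR (((Q:ℕ):ℝ) - a) j, show -(((Q:ℕ):ℝ) - a) = a - ((Q:ℕ):ℝ) by ring]
      ring
    calc ENNReal.ofReal ((R / 2 ^ (j+1)) ^ (-a)) * volume (S j)
        ≤ ENNReal.ofReal ((R / 2 ^ (j+1)) ^ (-a)) *
            (ENNReal.ofReal ((R / 2 ^ j) ^ (Q:ℕ)) * V) :=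
          mul_le_mul_right (gball_vol_le n₁ n₂ κ hn₁ hn₂ _ hρ) _
      _ = ENNReal.ofReal ((R / 2 ^ (j+1)) ^ (-a) * (R / 2 ^ j) ^ (Q:ℕ)) * V := by
          rw [← mul_assoc, ← ENNReal.ofReal_mul (Real.rpow_nonneg (by positivity) _)]
      _ = ENNReal.ofReal ((2 ^ a * R ^ (((Q:ℕ):ℝ) - a)) * ((2:ℝ) ^ (a - ((Q:ℕ):ℝ))) ^ j) * V := by
          rw [hreal]
  have hK0 : (0:ℝ) ≤ 2 ^ a * R ^ (((Q:ℕ):ℝ) - a) := by positivity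
  have hx00 : (0:ℝ) ≤ (2:ℝ) ^ (a - ((Q:ℕ):ℝ)) := by positivity
  calc ∫⁻ x in gball n₁ n₂ κ 0 R, w x ≤ ∫⁻ x in {0} ∪ ⋃ j, A j, w x :=
        lintegral_mono_set hcover
    _ ≤ (∫⁻ x in ({0} : Set (GS n₁ n₂)), w x) + ∫⁻ x in ⋃ j, A j, w x :=
        lintegral_union_le _ _ _
    _ = ∫⁻ x in ⋃ j, A j, w x := by
        rw [setLIntegral_measure_zero _ _ hzero, zero_add]
    _ ≤ ∑' j, ∫⁻ x in A j, w x := lintegral_iUnion_le _ _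
    _ ≤ ∑' j, ENNReal.ofReal ((2 ^ a * R ^ (((Q:ℕ):ℝ) - a)) *
          ((2:ℝ) ^ (a - ((Q:ℕ):ℝ))) ^ j) * V := ENNReal.tsum_le_tsum hterm
    _ = ENNReal.ofReal (2 ^ a * R ^ (((Q:ℕ):ℝ) - a)) * V *
          ∑' j, (ENNReal.ofReal ((2:ℝ) ^ (a - ((Q:ℕ):ℝ)))) ^ j := by
        simp_rw [ENNReal.ofReal_mul hK0, ENNReal.ofReal_pow hx00]
        rw [ENNReal.tsum_mul_right, ENNReal.tsum_mul_left]
        ring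
    _ = ENNReal.ofReal (2 ^ a * R ^ (((Q:ℕ):ℝ) - a)) * V *
          (1 - ENNReal.ofReal ((2:ℝ) ^ (a - ((Q:ℕ):ℝ))))⁻¹ := by
        rw [ENNReal.tsum_geometric]

lemma div_rpow_neg (x c : ℝ) (hx : 0 < x) (hc : 0 < c) (a : ℝ) :
    (x / c) ^ (-a) = x ^ (-a) * c ^ a := by
  rw [Real.div_rpow hx.le hc.le, Real.rpow_neg hc.le, div_eq_mul_inv, inv_inv]

set_option maxHeartbeats 1000000 in
lemma essinf_lower (n₁ n₂ κ : ℕ) (hn₁ : 1 ≤ n₁) (hn₂ : 1 ≤ n₂)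
    (a : ℝ) (ha0 : 0 ≤ a) (x₀ : GS n₁ n₂) (r : ℝ) (hr : 0 < r) (M : ℝ) (hM : 0 < M)
    (hub : ∀ x ∈ gball n₁ n₂ κ x₀ r, gd n₁ n₂ κ 0 x ≤ M) :
    M ^ (-a) ≤ essInf (fun x => gd n₁ n₂ κ 0 x ^ (-a))
      (volume.restrict (gball n₁ n₂ κ x₀ r)) := by
  haveI : NeZero n₁ := ⟨by omega⟩
  haveI : NeZero n₂ := ⟨by omega⟩
  set Q : ℕ := n₁ + (1 + κ) * n₂ with hQ_def
  have hQ1 : 1 ≤ Q := by rw [hQ_def]; omega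
  set B := gball n₁ n₂ κ x₀ r with hB_def
  set μB := volume.restrict B with hμB_def
  set f : GS n₁ n₂ → ℝ := fun x => gd n₁ n₂ κ 0 x ^ (-a) with hf_def
  have hBmeas : MeasurableSet B := measurableSet_gball n₁ n₂ κ x₀ r
  -- a.e. lower bound
  have h0 : ∀ᵐ x ∂(volume : Measure (GS n₁ n₂)), x ≠ 0 := by
    rw [ae_iff]
    simp only [ne_eq, not_not]
    rw [Set.setOf_eq_eq_singleton]
    exact vol_zero_singleton n₁ n₂ hn₁
  have hae : ∀ᶠ x in ae μB, M ^ (-a) ≤ f x := by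
    filter_upwards [ae_restrict_of_ae h0, ae_restrict_mem hBmeas] with x hx hxB
    exact Real.rpow_le_rpow_of_nonpos (gd_zero_pos n₁ n₂ κ hx) (hub x hxB) (by linarith)
  -- coboundedness via a positive-measure set where f is bounded
  set P := (Metric.ball x₀.1 (r / 2)) ×ˢ (Metric.ball x₀.2 ((r / 2) ^ (1 + κ))) with hP_def
  have hPB : P ⊆ B := prod_subset_gball n₁ n₂ κ x₀ r hr
  have hPvol : volume P = ENNReal.ofReal ((r / 2) ^ Q) * (ballVol n₁ * ballVol n₂) := by
    rw [hP_def, vol_prod_balls n₁ n₂ x₀ _ _ (by positivity) (by positivity),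
      ← pow_mul, ← pow_add]
  have hV0 : (ballVol n₁ * ballVol n₂) ≠ 0 :=
    mul_ne_zero (ballVol_pos n₁).ne' (ballVol_pos n₂).ne'
  have hVtop : (ballVol n₁ * ballVol n₂) ≠ ⊤ :=
    (ENNReal.mul_lt_top (ballVol_lt_top n₁) (ballVol_lt_top n₂)).ne
  set T := P \ gball n₁ n₂ κ 0 (r / 4) with hT_def
  have hTvol : volume T ≠ 0 := by
    intro hT0
    have hsplit : volume P ≤ volume T + volume (gball n₁ n₂ κ 0 (r / 4)) := by
      calc volume P ≤ volume (T ∪ gball n₁ n₂ κ 0 (r / 4)) :=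
            measure_mono (by rw [hT_def]; exact Set.subset_diff_union _ _)
        _ ≤ _ := measure_union_le _ _
    have hsmall : volume (gball n₁ n₂ κ 0 (r / 4)) < volume P := by
      rw [hPvol]
      calc volume (gball n₁ n₂ κ 0 (r / 4))
          ≤ ENNReal.ofReal ((r / 4) ^ Q) * (ballVol n₁ * ballVol n₂) :=
            gball_vol_le n₁ n₂ κ hn₁ hn₂ _ (by positivity)
        _ < ENNReal.ofReal ((r / 2) ^ Q) * (ballVol n₁ * ballVol n₂) := by
            rw [ENNReal.mul_lt_mul_iff_left hV0 hVtop]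
            rw [ENNReal.ofReal_lt_ofReal_iff (by positivity)]
            apply pow_lt_pow_left₀ (by linarith) (by positivity)
            omega
    rw [hT0, zero_add] at hsplit
    exact absurd hsplit (not_le.2 hsmall)
  have hTbound : ∀ x ∈ T, f x ≤ (r / 4) ^ (-a) := by
    intro x hx
    have hxlb : r / 4 ≤ gd n₁ n₂ κ 0 x := not_lt.1 hx.2
    exact Real.rpow_le_rpow_of_nonpos (by positivity) hxlb (by linarith)
  have hfreq : ∃ᶠ x in ae μB, f x ≤ (r / 4) ^ (-a) := by
    intro hcon
    rw [ae_iff] at hcon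
    simp only [not_not] at hcon
    have hTB : μB T = volume T := by
      rw [hμB_def, Measure.restrict_apply' hBmeas,
        Set.inter_eq_self_of_subset_left (hT_def ▸ (Set.diff_subset.trans hPB))]
    have : μB T = 0 := by
      apply le_antisymm _ zero_le
      rw [← hcon]
      exact measure_mono hTbound
    rw [hTB] at this
    exact hTvol this
  have hco : Filter.IsCoboundedUnder (· ≥ ·) (ae μB) f :=
    Filter.IsCoboundedUnder.of_frequently_le hfreq
  exact Filter.le_liminf_of_le hco hae

set_option maxHeartbeats 2000000 in
/-- For `0 ≤ a < Q = n₁ + (1+κ)n₂`, the weight `w_a(x) = d(0,x)^{-a}` is a Muckenhoupt `A₁`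
weight on the homogeneous space `(ℝ^{n₁+n₂}, d, Lebesgue)`: there is a constant `C` such
that for every `d`-ball `B`, `(1/|B|) ∫_B d(0,x)^{-a} dx ≤ C · ess inf_{x ∈ B} d(0,x)^{-a}`. -/
theorem grushin_power_weight_A1 (n₁ n₂ κ : ℕ) (hn₁ : 1 ≤ n₁) (hn₂ : 1 ≤ n₂) (hκ : 1 ≤ κ)
    (a : ℝ) (ha0 : 0 ≤ a) (haQ : a < (n₁ : ℝ) + (1 + (κ : ℝ)) * n₂) :
    ∃ C : ℝ, 0 < C ∧ ∀ (x₀ : GS n₁ n₂) (r : ℝ), 0 < r →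
      (∫ x in gball n₁ n₂ κ x₀ r, gd n₁ n₂ κ 0 x ^ (-a)) ≤
        C * (volume (gball n₁ n₂ κ x₀ r)).toReal *
          essInf (fun x => gd n₁ n₂ κ 0 x ^ (-a)) (volume.restrict (gball n₁ n₂ κ x₀ r)) := by
  classical
  set C₀ : ℝ := 3 * 6 ^ κ with hC0_def
  have h6κ : (1:ℝ) ≤ 6 ^ κ := one_le_pow₀ (by norm_num)
  have hC01 : 1 ≤ C₀ := by rw [hC0_def]; linarith
  have hC00 : 0 < C₀ := by linarith
  set Q : ℕ := n₁ + (1 + κ) * n₂ with hQ_def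
  have hQr : ((Q : ℕ) : ℝ) = (n₁ : ℝ) + (1 + (κ : ℝ)) * (n₂ : ℝ) := by
    rw [hQ_def]; push_cast; ring
  have haQ' : a < ((Q : ℕ) : ℝ) := by rw [hQr]; exact haQ
  set V : ℝ≥0∞ := ballVol n₁ * ballVol n₂ with hV_def
  have hVtop : V ≠ ⊤ := (ENNReal.mul_lt_top (ballVol_lt_top n₁) (ballVol_lt_top n₂)).ne
  set Vr : ℝ := V.toReal with hVr_def
  set Gx : ℝ≥0∞ := (1 - ENNReal.ofReal ((2:ℝ) ^ (a - ((Q:ℕ):ℝ))))⁻¹ with hGx_def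
  have hx1 : ENNReal.ofReal ((2:ℝ) ^ (a - ((Q:ℕ):ℝ))) < 1 := by
    rw [show (1:ℝ≥0∞) = ENNReal.ofReal 1 by simp]
    rw [ENNReal.ofReal_lt_ofReal_iff one_pos]
    exact Real.rpow_lt_one_of_one_lt_of_neg one_lt_two (by linarith)
  have hGxtop : Gx ≠ ⊤ := by
    rw [hGx_def, Ne, ENNReal.inv_eq_top]
    intro h
    rw [tsub_eq_zero_iff_le] at h
    exact absurd h (not_le.2 hx1)
  set Gr : ℝ := Gx.toReal with hGr_def
  have hGr0 : 0 ≤ Gr := ENNReal.toReal_nonneg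
  set K₁ : ℝ := C₀ * (4 * C₀ ^ 2 + 1) with hK1_def
  have hK10 : 0 < K₁ := by rw [hK1_def]; positivity
  set Cfar : ℝ := (4 * C₀ ^ 2) ^ ((Q:ℕ):ℝ) with hCfar_def
  have hCfar0 : 0 < Cfar := Real.rpow_pos_of_pos (by positivity) _
  set Cnear : ℝ := 2 ^ a * K₁ ^ ((Q:ℕ):ℝ) * 2 ^ ((Q:ℕ):ℝ) * Gr with hCnear_def
  have hCnear0 : 0 ≤ Cnear := by
    rw [hCnear_def]
    have h1 : (0:ℝ) < 2 ^ a := Real.rpow_pos_of_pos (by norm_num) a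
    have h2 : (0:ℝ) < K₁ ^ ((Q:ℕ):ℝ) := Real.rpow_pos_of_pos hK10 _
    have h3 : (0:ℝ) < 2 ^ ((Q:ℕ):ℝ) := Real.rpow_pos_of_pos (by norm_num) _
    exact mul_nonneg (by positivity) hGr0
  refine ⟨Cfar + Cnear + 1, by linarith, ?_⟩
  intro x₀ r hr
  set B := gball n₁ n₂ κ x₀ r with hB_def
  have hBmeas : MeasurableSet B := measurableSet_gball n₁ n₂ κ x₀ r
  have hBtop : volume B ≠ ⊤ := (gball_vol_lt_top n₁ n₂ κ x₀ r hr).ne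
  set volBr : ℝ := (volume B).toReal with hvolBr_def
  have hvolBr0 : 0 ≤ volBr := ENNReal.toReal_nonneg
  set f : GS n₁ n₂ → ℝ := fun x => gd n₁ n₂ κ 0 x ^ (-a) with hf_def
  have hf0 : ∀ x, 0 ≤ f x := fun x => Real.rpow_nonneg (gd_nonneg n₁ n₂ κ 0 x) _
  set d0 : ℝ := gd n₁ n₂ κ 0 x₀ with hd0_def
  have hd00 : 0 ≤ d0 := by rw [hd0_def]; exact gd_nonneg _ _ _ _ _
  have hquasi : ∀ x ∈ B, gd n₁ n₂ κ 0 x ≤ C₀ * (d0 + gd n₁ n₂ κ x₀ x) :=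
    fun x _ => gd_quasi n₁ n₂ κ hκ 0 x₀ x
  have hmem_lt : ∀ x ∈ B, gd n₁ n₂ κ x₀ x < r := fun x hx => hx
  obtain ⟨M, hM0, hub, hIbound⟩ : ∃ M : ℝ, 0 < M ∧ (∀ x ∈ B, gd n₁ n₂ κ 0 x ≤ M) ∧
      (∫⁻ x in B, ENNReal.ofReal (f x)).toReal ≤ (Cfar + Cnear) * volBr * M ^ (-a) := by
    by_cases hcase : 4 * C₀ ^ 2 * r ≤ d0
    · -- far case
      have hd0pos : 0 < d0 := lt_of_lt_of_le (by positivity) hcase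
      have hMpos : 0 < 2 * C₀ * d0 := mul_pos (by linarith) hd0pos
      have hub' : ∀ x ∈ B, gd n₁ n₂ κ 0 x ≤ 2 * C₀ * d0 := by
        intro x hx
        have h2 := hmem_lt x hx
        have hrd0 : r ≤ d0 := by
          nlinarith [mul_nonneg (show (0:ℝ) ≤ 4*C₀^2 - 1 by nlinarith) hr.le]
        calc gd n₁ n₂ κ 0 x ≤ C₀ * (d0 + gd n₁ n₂ κ x₀ x) := hquasi x hx
          _ ≤ C₀ * (d0 + d0) := by
              apply mul_le_mul_of_nonneg_left _ hC00.le
              linarith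
          _ = 2 * C₀ * d0 := by ring
      refine ⟨2 * C₀ * d0, hMpos, hub', ?_⟩
      have hlb : ∀ x ∈ B, d0 / (2 * C₀) ≤ gd n₁ n₂ κ 0 x := by
        intro x hx
        have h2 := hmem_lt x hx
        have h3 : d0 ≤ C₀ * (gd n₁ n₂ κ 0 x + gd n₁ n₂ κ x x₀) := by
          rw [hd0_def]
          exact gd_quasi n₁ n₂ κ hκ 0 x x₀
        rw [gd_symm n₁ n₂ κ x x₀] at h3
        rw [div_le_iff₀ (by positivity)]
        nlinarith [mul_le_mul_of_nonneg_left h2.le hC00.le,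
          mul_nonneg (mul_nonneg (show (0:ℝ) ≤ 2*C₀-1 by linarith) hC00.le) hr.le]
      have hpt : ∀ x ∈ B, f x ≤ Cfar * (2*C₀*d0) ^ (-a) := by
        intro x hx
        have hL : (2*C₀*d0) / (4*C₀^2) ≤ gd n₁ n₂ κ 0 x := by
          have he : (2*C₀*d0) / (4*C₀^2) = d0 / (2*C₀) := by
            field_simp
            ring
          rw [he]
          exact hlb x hx
        calc f x ≤ ((2*C₀*d0) / (4*C₀^2)) ^ (-a) :=
              Real.rpow_le_rpow_of_nonpos (by positivity) hL (by linarith)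
          _ = (2*C₀*d0) ^ (-a) * (4*C₀^2) ^ a := div_rpow_neg _ _ hMpos (by positivity) a
          _ ≤ (2*C₀*d0) ^ (-a) * Cfar := by
              apply mul_le_mul_of_nonneg_left _ (Real.rpow_nonneg hMpos.le _)
              rw [hCfar_def]
              exact Real.rpow_le_rpow_of_exponent_le (by nlinarith) haQ'.le
          _ = Cfar * (2*C₀*d0) ^ (-a) := by ring
      have hInt : ∫⁻ x in B, ENNReal.ofReal (f x) ≤
          ENNReal.ofReal (Cfar * (2*C₀*d0) ^ (-a)) * volume B := by
        calc ∫⁻ x in B, ENNReal.ofReal (f x)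
            ≤ ∫⁻ _x in B, ENNReal.ofReal (Cfar * (2*C₀*d0) ^ (-a)) := by
              apply setLIntegral_mono measurable_const
              intro x hx
              exact ENNReal.ofReal_le_ofReal (hpt x hx)
          _ = ENNReal.ofReal (Cfar * (2*C₀*d0) ^ (-a)) * volume B := setLIntegral_const _ _
      have hMa0 : (0:ℝ) ≤ (2*C₀*d0) ^ (-a) := Real.rpow_nonneg hMpos.le _
      calc (∫⁻ x in B, ENNReal.ofReal (f x)).toReal
          ≤ (ENNReal.ofReal (Cfar * (2*C₀*d0) ^ (-a)) * volume B).toReal :=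
            ENNReal.toReal_mono (ENNReal.mul_ne_top ENNReal.ofReal_ne_top hBtop) hInt
        _ = Cfar * (2*C₀*d0) ^ (-a) * volBr := by
            rw [ENNReal.toReal_mul, ENNReal.toReal_ofReal (by positivity)]
        _ ≤ (Cfar + Cnear) * volBr * (2*C₀*d0) ^ (-a) := by
            nlinarith [mul_nonneg (mul_nonneg hCnear0 hvolBr0) hMa0]
    · -- near case
      push_neg at hcase
      have hMpos : 0 < K₁ * r := mul_pos hK10 hr
      have hub' : ∀ x ∈ B, gd n₁ n₂ κ 0 x ≤ K₁ * r := by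
        intro x hx
        have h2 := hmem_lt x hx
        calc gd n₁ n₂ κ 0 x ≤ C₀ * (d0 + gd n₁ n₂ κ x₀ x) := hquasi x hx
          _ ≤ C₀ * (4*C₀^2*r + r) := by
              apply mul_le_mul_of_nonneg_left _ hC00.le
              linarith
          _ = K₁ * r := by rw [hK1_def]; ring
      refine ⟨K₁ * r, hMpos, hub', ?_⟩
      have hsub : B ⊆ gball n₁ n₂ κ 0 (K₁ * r) := by
        intro x hx
        have h2 := hmem_lt x hx
        show gd n₁ n₂ κ 0 x < K₁ * r
        calc gd n₁ n₂ κ 0 x ≤ C₀ * (d0 + gd n₁ n₂ κ x₀ x) := hquasi x hx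
          _ < C₀ * (4*C₀^2*r + r) := by
              apply mul_lt_mul_of_pos_left _ hC00
              linarith
          _ = K₁ * r := by rw [hK1_def]; ring
      have hI1 : ∫⁻ x in B, ENNReal.ofReal (f x) ≤
          ENNReal.ofReal (2 ^ a * (K₁ * r) ^ (((Q:ℕ):ℝ) - a)) * V * Gx := by
        calc ∫⁻ x in B, ENNReal.ofReal (f x)
            ≤ ∫⁻ x in gball n₁ n₂ κ 0 (K₁ * r), ENNReal.ofReal (f x) :=
              lintegral_mono_set hsub
          _ ≤ _ := weight_lintegral_le n₁ n₂ κ hn₁ hn₂ a ha0 (K₁ * r) hMpos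
      have hJtop : ENNReal.ofReal (2 ^ a * (K₁ * r) ^ (((Q:ℕ):ℝ) - a)) * V * Gx ≠ ⊤ :=
        ENNReal.mul_ne_top (ENNReal.mul_ne_top ENNReal.ofReal_ne_top hVtop) hGxtop
      have hvol : (r/2)^(Q:ℕ) * Vr ≤ volBr := by
        have h := gball_vol_ge n₁ n₂ κ hn₁ hn₂ x₀ r hr
        have h2 := ENNReal.toReal_mono hBtop h
        rwa [ENNReal.toReal_mul, ENNReal.toReal_ofReal (by positivity)] at h2
      have hr2 : r ^ (((Q:ℕ)):ℝ) = 2 ^ (((Q:ℕ)):ℝ) * (r/2) ^ ((Q:ℕ)) := by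
        rw [← Real.rpow_natCast (r/2) Q, ← Real.mul_rpow (by norm_num) (by positivity)]
        congr 1
        ring
      have hMQ : (K₁ * r) ^ (((Q:ℕ)):ℝ) =
          K₁ ^ (((Q:ℕ)):ℝ) * (2 ^ (((Q:ℕ)):ℝ) * (r/2) ^ (Q:ℕ)) := by
        rw [Real.mul_rpow hK10.le hr.le, hr2]
      have hMa0 : (0:ℝ) ≤ (K₁ * r) ^ (-a) := Real.rpow_nonneg hMpos.le _
      calc (∫⁻ x in B, ENNReal.ofReal (f x)).toReal
          ≤ (ENNReal.ofReal (2 ^ a * (K₁ * r) ^ (((Q:ℕ):ℝ) - a)) * V * Gx).toReal :=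
            ENNReal.toReal_mono hJtop hI1
        _ = 2 ^ a * (K₁ * r) ^ (((Q:ℕ):ℝ) - a) * Vr * Gr := by
            rw [ENNReal.toReal_mul, ENNReal.toReal_mul, ENNReal.toReal_ofReal (by positivity)]
        _ = Cnear * ((r/2)^(Q:ℕ) * Vr) * (K₁ * r) ^ (-a) := by
            rw [show (((Q:ℕ):ℝ) - a) = ((Q:ℕ):ℝ) + (-a) by ring, Real.rpow_add hMpos, hMQ,
              hCnear_def]
            ring
        _ ≤ Cnear * volBr * (K₁ * r) ^ (-a) := by
            apply mul_le_mul_of_nonneg_right _ hMa0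
            exact mul_le_mul_of_nonneg_left hvol hCnear0
        _ ≤ (Cfar + Cnear) * volBr * (K₁ * r) ^ (-a) := by
            apply mul_le_mul_of_nonneg_right _ hMa0
            apply mul_le_mul_of_nonneg_right _ hvolBr0
            linarith
  have hess : M ^ (-a) ≤ essInf f (volume.restrict B) :=
    essinf_lower n₁ n₂ κ hn₁ hn₂ a ha0 x₀ r hr M hM0 hub
  have hMa0 : 0 ≤ M ^ (-a) := Real.rpow_nonneg hM0.le _
  have hess0 : 0 ≤ essInf f (volume.restrict B) := le_trans hMa0 hess
  rw [MeasureTheory.integral_eq_lintegral_of_nonneg_ae (ae_of_all _ hf0)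
    ((measurable_weight n₁ n₂ κ a).aestronglyMeasurable)]
  calc (∫⁻ x in B, ENNReal.ofReal (f x)).toReal
      ≤ (Cfar + Cnear) * volBr * M ^ (-a) := hIbound
    _ ≤ (Cfar + Cnear) * volBr * essInf f (volume.restrict B) :=
        mul_le_mul_of_nonneg_left hess (mul_nonneg (by linarith) hvolBr0)
    _ ≤ (Cfar + Cnear + 1) * volBr * essInf f (volume.restrict B) := by
        apply mul_le_mul_of_nonneg_right _ hess0
        apply mul_le_mul_of_nonneg_right _ hvolBr0
        linarith
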